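/- arXiv:2010.09778 — 2 statements merged into one kernel-verified Lean document; each statement's English description precedes it below -/
import Mathlib

section
/- Let μ, a ∈ ℝ with a + μ ≥ 0. Then there exists a constant C > 0 (depending only on μ and a) such that x^a |J_μ(x)| ≤ C (1+x)^{a−1/2} for all x > 0. -/
open MeasureTheory Real Set

/-- The Bessel function of the first kind of order `ν`, defined by its power series
(with the convention `1/Γ = 0` at the poles of `Γ`). -/
noncomputable def besselJ (ν : ℝ) (x : ℝ) : ℝ :=
  ∑' k : ℕ, ((-1 : ℝ) ^ k / ((k.factorial : ℝ) * Real.Gamma (ν + (k : ℝ) + 1))) *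
    (x / 2) ^ (2 * (k : ℝ) + ν)

/-!
For `x > 0`, `J_ν(x) = (x/2)^ν g_ν(x²/4)` where `g_ν(t) = ∑ (-1)^k t^k / (k! Γ(ν+k+1))` is
entire; so on `(0, 1]` the weight `x^a` combines with `(x/2)^ν` into `x^(a+ν) ≤ 1` and the
continuous `g_ν` is bounded.

For `x ≥ 1`, the recurrences `J_ν' = (ν/x) J_ν - J_{ν+1}` and
`J_ν + J_{ν+2} = 2(ν+1)/x · J_{ν+1}` (read off from `g_ν' = -g_{ν+1}` and
`g_ν(t) = (ν+1) g_{ν+1}(t) - t g_{ν+2}(t)`) show that `P = √x J_ν` solves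
`P'' = ((ν² - 1/4)/x² - 1) P`. The energy `(P² + P'²) exp(|ν² - 1/4|/x)` is nonincreasing,
so `P` is bounded, i.e. `x^a |J_ν(x)| ≲ x^(a - 1/2)`.
-/

open Filter Topology
open scoped Nat

section PowerSeries

variable {c : ℕ → ℝ}

theorem summable_norm_mul_pow_of_ratio_le
    (hc : ∀ ε > 0, ∀ᶠ k in atTop, |c (k + 1)| ≤ ε * |c k|) (r : ℝ) :
    Summable fun k => ‖c k * r ^ k‖ := by
  refine summable_of_ratio_norm_eventually_le (r := 1 / 2) (by norm_num) ?_
  filter_upwards [hc (1 / (2 * (|r| + 1))) (by positivity)] with k hk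
  have hr : |r| * (1 / (2 * (|r| + 1))) ≤ 1 / 2 := by
    rw [← mul_div_assoc, mul_one, div_le_div_iff₀ (by positivity) two_pos]
    linarith
  simp only [norm_mul, norm_pow, Real.norm_eq_abs, abs_abs, pow_succ]
  calc |c (k + 1)| * (|r| ^ k * |r|)
      ≤ 1 / (2 * (|r| + 1)) * |c k| * (|r| ^ k * |r|) := by gcongr
    _ = |r| * (1 / (2 * (|r| + 1))) * (|c k| * |r| ^ k) := by ring
    _ ≤ 1 / 2 * (|c k| * |r| ^ k) := by gcongr

theorem hasDerivAt_tsum_mul_pow (hc : ∀ r, Summable fun k => ‖c k * r ^ k‖)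
    (hd : ∀ r, Summable fun k => ‖(k + 1) * c (k + 1) * r ^ k‖) (t : ℝ) :
    HasDerivAt (fun s => ∑' k, c k * s ^ k) (∑' k, (k + 1) * c (k + 1) * t ^ k) t := by
  set R := |t| + 1
  have ht : t ∈ Ioo (-R) R := abs_lt.1 (lt_add_one _)
  have hu : Summable fun k : ℕ => ‖k * c k * R ^ (k - 1)‖ := by
    rw [← summable_nat_add_iff 1]
    simpa using hd R
  have hderiv := hasDerivAt_tsum_of_isPreconnected hu isOpen_Ioo (convex_Ioo _ _).isPreconnected
    (g := fun k y => c k * y ^ k) (g' := fun k y => k * c k * y ^ (k - 1))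
    (fun k y _ => by
      simpa [mul_comm, mul_assoc, mul_left_comm] using (hasDerivAt_pow k y).const_mul (c k))
    (fun k y hy => by
      simp only [norm_mul, norm_pow]
      gcongr
      exact (abs_lt.2 hy).le.trans (Real.le_norm_self R)) ht (hc t).of_norm ht
  refine hderiv.congr_deriv ?_
  have hshift : Summable fun k : ℕ => (k : ℝ) * c k * t ^ (k - 1) := by
    rw [← summable_nat_add_iff 1]
    simpa using (hd t).of_norm
  rw [hshift.tsum_eq_zero_add]
  simp

theorem tsum_natCast_mul_mul_pow {t : ℝ} (hd : Summable fun k => (k + 1) * c (k + 1) * t ^ k) :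
    ∑' k : ℕ, k * c k * t ^ k = t * ∑' k, (k + 1) * c (k + 1) * t ^ k := by
  rw [(summable_nat_add_iff 1).1 ?_ |>.tsum_eq_zero_add, ← tsum_mul_left]
  · simp only [CharP.cast_eq_zero, zero_mul, zero_add, Nat.cast_add, Nat.cast_one, pow_succ]
    exact tsum_congr fun k => by ring
  · simpa [pow_succ, mul_comm, mul_assoc, mul_left_comm] using hd.mul_left t

end PowerSeries

noncomputable def besselCoeff (ν : ℝ) (k : ℕ) : ℝ :=
  (-1) ^ k / (k ! * Gamma (ν + k + 1))

noncomputable def besselSeries (ν t : ℝ) : ℝ :=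
  ∑' k, besselCoeff ν k * t ^ k

section BesselSeries

variable (ν : ℝ)

theorem besselCoeff_eq_mul_besselCoeff_add_one (k : ℕ) :
    besselCoeff ν k = (ν + k + 1) * besselCoeff (ν + 1) k := by
  -- at a pole of `Γ` Mathlib's `Gamma` is `0`, so both sides vanish
  rcases eq_or_ne (ν + k + 1) 0 with h | h
  · simp [besselCoeff, h, Gamma_zero]
  · rw [besselCoeff, besselCoeff, show ν + 1 + k + 1 = ν + k + 1 + 1 by ring, Gamma_add_one h]
    rcases eq_or_ne (Gamma (ν + k + 1)) 0 with hΓ | hΓ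
    · simp [hΓ]
    · field_simp

theorem succ_mul_besselCoeff_succ (k : ℕ) :
    (k + 1) * besselCoeff ν (k + 1) = -besselCoeff (ν + 1) k := by
  rw [besselCoeff, besselCoeff, Nat.factorial_succ, pow_succ]
  push_cast
  rw [show ν + (k + 1) + 1 = ν + 1 + k + 1 by ring]
  rcases eq_or_ne (Gamma (ν + 1 + k + 1)) 0 with hΓ | hΓ
  · simp [hΓ]
  · field_simp

theorem abs_besselCoeff_eq_mul_abs_besselCoeff_succ (k : ℕ) :
    |besselCoeff ν k| = (k + 1) * |ν + k + 1| * |besselCoeff ν (k + 1)| := by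
  rw [besselCoeff_eq_mul_besselCoeff_add_one, ← neg_neg (besselCoeff (ν + 1) k),
    ← succ_mul_besselCoeff_succ, abs_mul, abs_neg, abs_mul,
    abs_of_pos (by positivity : (0 : ℝ) < k + 1)]
  ring

theorem eventually_abs_besselCoeff_succ_le :
    ∀ ε > 0, ∀ᶠ k in atTop, |besselCoeff ν (k + 1)| ≤ ε * |besselCoeff ν k| := by
  intro ε hε
  filter_upwards [eventually_ge_atTop ⌈|ν| + ε⁻¹⌉₊] with k hk
  have hk : |ν| + ε⁻¹ ≤ k := Nat.ceil_le.1 hk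
  have hlarge : ε⁻¹ ≤ (k + 1) * |ν + k + 1| := by
    have := neg_abs_le ν
    have := le_abs_self (ν + k + 1)
    nlinarith [abs_nonneg (ν + k + 1)]
  have hone : 1 ≤ ε * ((k + 1) * |ν + k + 1|) := by
    calc 1 = ε * ε⁻¹ := (mul_inv_cancel₀ hε.ne').symm
      _ ≤ ε * ((k + 1) * |ν + k + 1|) := by gcongr
  rw [abs_besselCoeff_eq_mul_abs_besselCoeff_succ ν k]
  nlinarith [abs_nonneg (besselCoeff ν (k + 1))]

theorem summable_norm_besselCoeff_mul_pow (r : ℝ) :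
    Summable fun k => ‖besselCoeff ν k * r ^ k‖ :=
  summable_norm_mul_pow_of_ratio_le (eventually_abs_besselCoeff_succ_le ν) r

theorem hasDerivAt_besselSeries (t : ℝ) :
    HasDerivAt (besselSeries ν) (-besselSeries (ν + 1) t) t := by
  have h := hasDerivAt_tsum_mul_pow (summable_norm_besselCoeff_mul_pow ν)
    (by simpa [succ_mul_besselCoeff_succ] using summable_norm_besselCoeff_mul_pow (ν + 1)) t
  simp only [succ_mul_besselCoeff_succ, neg_mul, tsum_neg] at h
  exact h

theorem besselSeries_three_term_recurrence (t : ℝ) :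
    besselSeries ν t = (ν + 1) * besselSeries (ν + 1) t - t * besselSeries (ν + 2) t := by
  have hEuler := tsum_natCast_mul_mul_pow (c := besselCoeff (ν + 1)) (t := t)
    (by simpa [succ_mul_besselCoeff_succ] using
      (summable_norm_besselCoeff_mul_pow (ν + 1 + 1) t).of_norm.neg)
  simp only [succ_mul_besselCoeff_succ, neg_mul, tsum_neg, show ν + 1 + 1 = ν + 2 by ring]
    at hEuler
  have hs := (summable_norm_besselCoeff_mul_pow (ν + 1) t).of_norm
  have hν := (summable_norm_besselCoeff_mul_pow ν t).of_norm
  have hk : Summable fun k : ℕ => k * besselCoeff (ν + 1) k * t ^ k :=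
    (hν.sub (hs.mul_left (ν + 1))).congr fun k => by
      rw [besselCoeff_eq_mul_besselCoeff_add_one]; ring
  unfold besselSeries
  rw [sub_eq_add_neg, ← mul_neg, ← hEuler, ← tsum_mul_left, ← (hs.mul_left _).tsum_add hk]
  exact tsum_congr fun k => by rw [besselCoeff_eq_mul_besselCoeff_add_one]; ring

end BesselSeries

section BesselJ

variable (ν : ℝ) {x : ℝ}

theorem besselJ_eq_rpow_mul_besselSeries (hx : 0 < x) :
    besselJ ν x = (x / 2) ^ ν * besselSeries ν ((x / 2) ^ 2) := by
  rw [besselJ, besselSeries, ← tsum_mul_left]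
  refine tsum_congr fun k => ?_
  rw [rpow_add (by positivity), show 2 * (k : ℝ) = ((2 * k : ℕ) : ℝ) by push_cast; ring,
    rpow_natCast, pow_mul, besselCoeff]
  ring

theorem hasDerivAt_besselJ (hx : 0 < x) :
    HasDerivAt (besselJ ν) (ν / x * besselJ ν x - besselJ (ν + 1) x) x := by
  have hhalf : HasDerivAt (fun y : ℝ => y / 2) (1 / 2) x := (hasDerivAt_id x).div_const 2
  have h := (hhalf.rpow_const (p := ν) (Or.inl (by positivity))).mul
    ((hasDerivAt_besselSeries ν _).comp x (hhalf.pow 2))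
  have hJ : besselJ ν =ᶠ[𝓝 x] fun y => (y / 2) ^ ν * besselSeries ν ((y / 2) ^ 2) :=
    (lt_mem_nhds hx).mono fun y hy => besselJ_eq_rpow_mul_besselSeries ν hy
  refine (h.congr_of_eventuallyEq hJ).congr_deriv ?_
  simp only [Function.comp_apply, Pi.pow_apply]
  rw [besselJ_eq_rpow_mul_besselSeries ν hx, besselJ_eq_rpow_mul_besselSeries (ν + 1) hx,
    rpow_sub_one (by positivity), rpow_add_one (by positivity)]
  field_simp
  ring

theorem besselJ_add_besselJ_add_two (hx : 0 < x) :
    besselJ ν x + besselJ (ν + 2) x = 2 * (ν + 1) / x * besselJ (ν + 1) x := by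
  rw [besselJ_eq_rpow_mul_besselSeries ν hx, besselJ_eq_rpow_mul_besselSeries (ν + 1) hx,
    besselJ_eq_rpow_mul_besselSeries (ν + 2) hx, besselSeries_three_term_recurrence ν,
    rpow_add_one (by positivity), rpow_add (by positivity), rpow_two]
  field_simp
  ring

theorem hasDerivAt_besselJ_add_one (hx : 0 < x) :
    HasDerivAt (besselJ (ν + 1)) (besselJ ν x - (ν + 1) / x * besselJ (ν + 1) x) x := by
  refine (hasDerivAt_besselJ (ν + 1) hx).congr_deriv ?_
  rw [show ν + 1 + 1 = ν + 2 by ring]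
  linear_combination (-1 : ℝ) * besselJ_add_besselJ_add_two ν hx

end BesselJ

theorem sq_add_sq_le_of_hasDerivAt {P W : ℝ → ℝ} {c : ℝ}
    (hP : ∀ x, 1 ≤ x → HasDerivAt P (W x) x)
    (hW : ∀ x, 1 ≤ x → HasDerivAt W (c / x ^ 2 * P x - P x) x) {x : ℝ} (hx : 1 ≤ x) :
    P x ^ 2 + W x ^ 2 ≤ (P 1 ^ 2 + W 1 ^ 2) * exp |c| := by
  set E : ℝ → ℝ := fun y => (P y ^ 2 + W y ^ 2) * exp (|c| / y)
  have hE : ∀ y, 1 ≤ y → HasDerivAt E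
      (exp (|c| / y) / y ^ 2 * (c * (2 * P y * W y) - |c| * (P y ^ 2 + W y ^ 2))) y := by
    intro y hy
    have hy0 : y ≠ 0 := by positivity
    have h := (((hP y hy).pow 2).add ((hW y hy).pow 2)).mul
      (((hasDerivAt_inv hy0).const_mul |c|).exp)
    refine (h.congr_of_eventuallyEq
      (Eventually.of_forall fun z => by simp [E, div_eq_mul_inv])).congr_deriv ?_
    simp only [Pi.add_apply, Pi.pow_apply]
    field_simp
    ring
  -- `(P² + W²)' = 2cPW / y² ≤ |c| (P² + W²) / y²`, which the weight `exp (|c| / y)` absorbs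
  have hcross : ∀ y, c * (2 * P y * W y) ≤ |c| * (P y ^ 2 + W y ^ 2) := fun y =>
    calc c * (2 * P y * W y) ≤ |c| * |2 * P y * W y| := by rw [← abs_mul]; exact le_abs_self _
      _ ≤ |c| * (P y ^ 2 + W y ^ 2) := by
        gcongr
        exact abs_le.2
          ⟨by nlinarith [sq_nonneg (P y + W y)], by nlinarith [sq_nonneg (P y - W y)]⟩
  have hanti : AntitoneOn E (Ici 1) := by
    refine antitoneOn_of_hasDerivWithinAt_nonpos (convex_Ici 1)
      (f' := fun y => exp (|c| / y) / y ^ 2 * (c * (2 * P y * W y) - |c| * (P y ^ 2 + W y ^ 2)))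
      (fun y hy => (hE y hy).continuousAt.continuousWithinAt) (fun y hy => ?_) (fun y hy => ?_)
    · rw [interior_Ici] at hy
      exact (hE y (le_of_lt hy)).hasDerivWithinAt
    · exact mul_nonpos_of_nonneg_of_nonpos (by positivity) (sub_nonpos.2 (hcross y))
  calc P x ^ 2 + W x ^ 2 ≤ E x :=
        le_mul_of_one_le_right (by positivity) (one_le_exp (by positivity))
    _ ≤ E 1 := hanti self_mem_Ici hx hx
    _ = (P 1 ^ 2 + W 1 ^ 2) * exp |c| := by simp [E]

section LiouvilleNormalForm

variable (ν : ℝ) {x : ℝ}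

theorem hasDerivAt_sqrt_mul_besselJ (hx : 0 < x) :
    HasDerivAt (fun y => √y * besselJ ν y)
      ((ν + 1 / 2) / x * (√x * besselJ ν x) - √x * besselJ (ν + 1) x) x := by
  refine ((hasDerivAt_sqrt hx.ne').mul (hasDerivAt_besselJ ν hx)).congr_deriv ?_
  have hs : √x ^ 2 = x := sq_sqrt hx.le
  have : 0 < √x := sqrt_pos.2 hx
  field_simp
  rw [hs]
  ring

theorem hasDerivAt_sqrt_mul_besselJ_add_one (hx : 0 < x) :
    HasDerivAt (fun y => √y * besselJ (ν + 1) y)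
      (√x * besselJ ν x - (ν + 1 / 2) / x * (√x * besselJ (ν + 1) x)) x := by
  refine ((hasDerivAt_sqrt hx.ne').mul (hasDerivAt_besselJ_add_one ν hx)).congr_deriv ?_
  have hs : √x ^ 2 = x := sq_sqrt hx.le
  have : 0 < √x := sqrt_pos.2 hx
  field_simp
  rw [hs]
  ring

theorem hasDerivAt_deriv_sqrt_mul_besselJ (hx : 0 < x) :
    HasDerivAt (fun y => (ν + 1 / 2) / y * (√y * besselJ ν y) - √y * besselJ (ν + 1) y)
      ((ν ^ 2 - 1 / 4) / x ^ 2 * (√x * besselJ ν x) - √x * besselJ ν x) x := by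
  have h := (((hasDerivAt_inv hx.ne').const_mul (ν + 1 / 2)).mul
    (hasDerivAt_sqrt_mul_besselJ ν hx)).sub (hasDerivAt_sqrt_mul_besselJ_add_one ν hx)
  refine (h.congr_of_eventuallyEq
    (Eventually.of_forall fun y => by simp [div_eq_mul_inv])).congr_deriv ?_
  field_simp
  ring

theorem exists_bound_sqrt_mul_abs_besselJ :
    ∃ K, ∀ x, 1 ≤ x → √x * |besselJ ν x| ≤ K := by
  set P : ℝ → ℝ := fun y => √y * besselJ ν y
  set W : ℝ → ℝ := fun y => (ν + 1 / 2) / y * P y - √y * besselJ (ν + 1) y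
  refine ⟨√((P 1 ^ 2 + W 1 ^ 2) * exp |ν ^ 2 - 1 / 4|), fun x hx => ?_⟩
  have h := sq_add_sq_le_of_hasDerivAt (P := P) (W := W)
    (fun y hy => hasDerivAt_sqrt_mul_besselJ ν (by positivity : (0 : ℝ) < y))
    (fun y hy => hasDerivAt_deriv_sqrt_mul_besselJ ν (by positivity : (0 : ℝ) < y)) hx
  rw [← abs_of_nonneg (sqrt_nonneg x), ← abs_mul]
  exact abs_le_sqrt (le_trans (le_add_of_nonneg_right (sq_nonneg _)) h)

end LiouvilleNormalForm

theorem exists_bound_rpow_mul_abs_besselJ_of_le_one (ν : ℝ) {a : ℝ} (h : 0 ≤ a + ν) :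
    ∃ M, ∀ x, 0 < x → x ≤ 1 → x ^ a * |besselJ ν x| ≤ M := by
  have hcont : Continuous (besselSeries ν) :=
    continuous_iff_continuousAt.2 fun t => (hasDerivAt_besselSeries ν t).continuousAt
  obtain ⟨B, hB⟩ := (isCompact_Icc (a := (0 : ℝ)) (b := 1 / 4)).exists_bound_of_continuousOn
    hcont.continuousOn
  refine ⟨2 ^ (-ν) * B, fun x hx hx1 => ?_⟩
  have hg := hB ((x / 2) ^ 2) ⟨by positivity, by nlinarith⟩
  rw [Real.norm_eq_abs] at hg
  rw [besselJ_eq_rpow_mul_besselSeries ν hx, abs_mul, abs_of_pos (by positivity)]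
  calc x ^ a * ((x / 2) ^ ν * |besselSeries ν ((x / 2) ^ 2)|)
      = 2 ^ (-ν) * (x ^ (a + ν) * |besselSeries ν ((x / 2) ^ 2)|) := by
        rw [div_rpow hx.le zero_le_two, rpow_add hx, rpow_neg zero_le_two]
        ring
    _ ≤ 2 ^ (-ν) * (1 * B) := by
        gcongr
        exact rpow_le_one hx.le hx1 h
    _ = 2 ^ (-ν) * B := by ring

theorem one_le_two_rpow_abs_mul_one_add_rpow (b : ℝ) {x : ℝ} (hx0 : 0 ≤ x) (hx1 : x ≤ 1) :
    1 ≤ 2 ^ |b| * (1 + x) ^ b := by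
  rcases le_total 0 b with hb | hb
  · exact one_le_mul_of_one_le_of_one_le (one_le_rpow one_le_two (abs_nonneg b))
      (one_le_rpow (by linarith) hb)
  · calc (1 : ℝ) = 2 ^ |b| * 2 ^ b := by
          rw [abs_of_nonpos hb, ← rpow_add zero_lt_two, neg_add_cancel, rpow_zero]
      _ ≤ 2 ^ |b| * (1 + x) ^ b :=
          mul_le_mul_of_nonneg_left (rpow_le_rpow_of_nonpos (by linarith) (by linarith) hb)
            (by positivity)

theorem rpow_le_two_rpow_abs_mul_one_add_rpow (b : ℝ) {x : ℝ} (hx : 1 ≤ x) :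
    x ^ b ≤ 2 ^ |b| * (1 + x) ^ b := by
  rcases le_total 0 b with hb | hb
  · calc x ^ b ≤ (1 + x) ^ b := rpow_le_rpow (by linarith) (by linarith) hb
      _ ≤ 2 ^ |b| * (1 + x) ^ b :=
          le_mul_of_one_le_left (by positivity) (one_le_rpow one_le_two (abs_nonneg b))
  · calc x ^ b = 2 ^ |b| * (2 * x) ^ b := by
          rw [abs_of_nonpos hb, mul_rpow zero_le_two (by linarith), ← mul_assoc,
            ← rpow_add zero_lt_two, neg_add_cancel, rpow_zero, one_mul]
      _ ≤ 2 ^ |b| * (1 + x) ^ b :=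
          mul_le_mul_of_nonneg_left (rpow_le_rpow_of_nonpos (by linarith) (by linarith) hb)
            (by positivity)

theorem bessel_weighted_pointwise_bound (μ a : ℝ) (h : 0 ≤ a + μ) :
    ∃ C > (0 : ℝ), ∀ x : ℝ, 0 < x →
      x ^ a * |besselJ μ x| ≤ C * (1 + x) ^ (a - 1 / 2) := by
  obtain ⟨M, hM⟩ := exists_bound_rpow_mul_abs_besselJ_of_le_one μ h
  obtain ⟨K, hK⟩ := exists_bound_sqrt_mul_abs_besselJ μ
  set D := max 1 (max M K)
  refine ⟨D * 2 ^ |a - 1 / 2|, by positivity, fun x hx => ?_⟩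
  rw [mul_assoc]
  rcases le_total x 1 with hx1 | hx1
  · calc x ^ a * |besselJ μ x| ≤ D * 1 := by
          rw [mul_one]; exact (hM x hx hx1).trans ((le_max_left _ _).trans (le_max_right _ _))
      _ ≤ D * (2 ^ |a - 1 / 2| * (1 + x) ^ (a - 1 / 2)) := by
          gcongr
          exact one_le_two_rpow_abs_mul_one_add_rpow _ hx.le hx1
  · calc x ^ a * |besselJ μ x| = x ^ (a - 1 / 2) * (√x * |besselJ μ x|) := by
          rw [sqrt_eq_rpow, ← mul_assoc, ← rpow_add hx]
          ring_nf
      _ ≤ x ^ (a - 1 / 2) * D := by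
          gcongr
          exact (hK x hx1).trans ((le_max_right _ _).trans (le_max_right _ _))
      _ ≤ D * (2 ^ |a - 1 / 2| * (1 + x) ^ (a - 1 / 2)) := by
          rw [mul_comm]
          gcongr
          exact rpow_le_two_rpow_abs_mul_one_add_rpow _ hx1
end

section
/- Let n ≥ 3 be an integer and ν ≥ (n−2)/2 real. Let ℓ, m ≥ 0 be integers, put k = ℓ + m, let α, β be integers with |α| ≤ ℓ and |β| ≤ m, and let σ > 1/2 + k. Let f, g : (0,∞) → ℂ be measurable functions and C₀ > 0 a constant such that |f(τ)| ≤ C₀ τ^{ν+α} for 0 < τ ≤ 1 and |f(τ)| ≤ C₀ τ^{−1/2} for τ ≥ 1, and |g(τ)| ≤ C₀ τ^{−(ν+β)} for 0 < τ ≤ 1 and |g(τ)| ≤ C₀ τ^{−1/2} for τ ≥ 1. Then there exists a constant C > 0 (depending only on n, ν, k, ℓ, m, α, β, σ, C₀) such that for every λ ≥ 1, ∫₀^∞ ∫_r^∞ |f(λr)|² |g(λs)|² r^{1+2ℓ} s^{1+2m} (1+s)^{−2σ} (1+r)^{−2σ} ds dr ≤ C λ^{−2}. -/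
/-!
Write `u = ‖f‖²`, `v = ‖g‖²`. For `λ ≥ 1` and `0 < r ≤ s` the kernel obeys the pointwise bound
`u(λr) v(λs) r^(1+2ℓ) s^(1+2m) ≤ C₀⁴ λ⁻² (1+r)^(2ℓ) (1+s)^(2m)`.
If `λs ≥ 1`, each variable contributes a factor `λ⁻¹`: the `τ^(-1/2)` decay does it for `g`, and for
`f` either the decay (`λr ≥ 1`) or the small-argument bound (`λr ≤ 1`, using `ν + α ≥ -ℓ - 1/2`).
If `λs < 1`, both small-argument bounds apply, and the singular factors `(λr)^(2ν) (λs)^(-2ν)`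
compensate since `r ≤ s`. Multiplied by the weights, the right-hand side is a product of two
functions integrable on `(0, ∞)` because `σ > 1/2 + ℓ + m`, which gives
`C = C₀⁴ / ((2σ - 2ℓ - 1)(2σ - 2m - 1))`.
-/

open MeasureTheory Real Set Filter Topology

theorem integral_Ioi_add_rpow_of_lt {a c m : ℝ} (ha : a < -1) (hc : -m < c) :
    ∫ x in Ioi c, (x + m) ^ a = -(c + m) ^ (a + 1) / (a + 1) := by
  have hderiv : ∀ x ∈ Ici c,
      HasDerivAt (fun t ↦ (t + m) ^ (a + 1) / (a + 1)) ((x + m) ^ a) x := by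
    intro x hx
    convert! (((hasDerivAt_id x).add_const m).rpow_const
      (p := a + 1) (Or.inl (by simp only [id]; linarith [mem_Ici.mp hx]))).div_const (a + 1) using 1
    simp [show a + 1 ≠ 0 by linarith]
  have hlim : Tendsto (fun t ↦ (t + m) ^ (a + 1) / (a + 1)) atTop (𝓝 (0 / (a + 1))) := by
    rw [← neg_neg (a + 1)]
    exact ((tendsto_rpow_neg_atTop (by linarith)).comp
      (tendsto_atTop_add_const_right _ m tendsto_id)).div_const _
  rw [integral_Ioi_of_hasDerivAt_of_tendsto' hderiv (integrableOn_add_rpow_Ioi_of_lt ha hc) hlim]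
  ring

theorem setIntegral_Ioi_setIntegral_Ioi_le_mul {a : ℝ} {F : ℝ → ℝ → ℝ} {φ ψ : ℝ → ℝ}
    (hF₀ : ∀ r s, a < r → r < s → 0 ≤ F r s) (hF : ∀ r s, a < r → r < s → F r s ≤ φ r * ψ s)
    (hφ₀ : ∀ r, a < r → 0 ≤ φ r) (hψ₀ : ∀ s, a < s → 0 ≤ ψ s)
    (hφ : IntegrableOn φ (Ioi a)) (hψ : IntegrableOn ψ (Ioi a)) :
    ∫ r in Ioi a, ∫ s in Ioi r, F r s ≤ (∫ r in Ioi a, φ r) * ∫ s in Ioi a, ψ s := by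
  rw [← integral_mul_const]
  refine integral_mono_of_nonneg ?_ (hφ.mul_const _) ?_
  · filter_upwards [ae_restrict_mem measurableSet_Ioi] with r (hr : a < r)
    exact setIntegral_nonneg measurableSet_Ioi fun s hs ↦ hF₀ r s hr hs
  · filter_upwards [ae_restrict_mem measurableSet_Ioi] with r (hr : a < r)
    have hψr : IntegrableOn ψ (Ioi r) := hψ.mono_set (Ioi_subset_Ioi hr.le)
    calc ∫ s in Ioi r, F r s ≤ ∫ s in Ioi r, φ r * ψ s :=
          integral_mono_of_nonneg
            (by filter_upwards [ae_restrict_mem measurableSet_Ioi] with s hs using hF₀ r s hr hs)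
            (hψr.const_mul _)
            (by filter_upwards [ae_restrict_mem measurableSet_Ioi] with s hs using hF r s hr hs)
      _ = φ r * ∫ s in Ioi r, ψ s := integral_const_mul _ _
      _ ≤ φ r * ∫ s in Ioi a, ψ s := by
          refine mul_le_mul_of_nonneg_left (setIntegral_mono_set hψ ?_
            (Ioi_subset_Ioi hr.le).eventuallyLE) (hφ₀ r hr)
          filter_upwards [ae_restrict_mem measurableSet_Ioi] with s hs using hψ₀ s hs

theorem integrableOn_Ioi_one_add_rpow {p : ℝ} (hp : p < -1) :
    IntegrableOn (fun x : ℝ ↦ (1 + x) ^ p) (Ioi 0) := by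
  simpa only [add_comm] using integrableOn_add_rpow_Ioi_of_lt hp (by norm_num : -(1 : ℝ) < 0)

theorem integral_Ioi_one_add_rpow {p : ℝ} (hp : p < -1) :
    ∫ x in Ioi (0 : ℝ), (1 + x) ^ p = -1 / (p + 1) := by
  simpa only [add_comm, zero_add, one_rpow] using
    integral_Ioi_add_rpow_of_lt hp (by norm_num : -(1 : ℝ) < 0)

theorem sq_le_sq_mul_rpow_of_le {x C τ γ : ℝ} (hx : 0 ≤ x) (hτ : 0 ≤ τ) (h : x ≤ C * τ ^ γ) :
    x ^ 2 ≤ C ^ 2 * τ ^ (2 * γ) := by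
  calc x ^ 2 ≤ (C * τ ^ γ) ^ 2 := pow_le_pow_left₀ hx h 2
    _ = C ^ 2 * τ ^ (2 * γ) := by rw [mul_pow, ← rpow_mul_natCast hτ]; norm_num [mul_comm]

section ScaledProfile

variable {E : Type*} [SeminormedAddGroup E] {h : ℝ → E} {C γ c k lam r : ℝ}

theorem sq_norm_mul_rpow_le_of_one_le_mul
    (h_large : ∀ τ : ℝ, 1 ≤ τ → ‖h τ‖ ≤ C * τ ^ (-(1 : ℝ) / 2))
    (hlam : 0 < lam) (hr : 0 < r) (h1 : 1 ≤ lam * r) :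
    ‖h (lam * r)‖ ^ 2 * r ^ (1 + 2 * k) ≤ C ^ 2 * lam ^ (-1 : ℝ) * r ^ (2 * k) := by
  have hsq : ‖h (lam * r)‖ ^ 2 ≤ C ^ 2 * (lam * r) ^ (-1 : ℝ) := by
    have := sq_le_sq_mul_rpow_of_le (norm_nonneg _) (by positivity) (h_large _ h1)
    rwa [show 2 * (-(1 : ℝ) / 2) = -1 by norm_num] at this
  calc ‖h (lam * r)‖ ^ 2 * r ^ (1 + 2 * k) ≤ C ^ 2 * (lam * r) ^ (-1 : ℝ) * r ^ (1 + 2 * k) := by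
        gcongr
    _ = C ^ 2 * lam ^ (-1 : ℝ) * r ^ (2 * k) := by
        rw [mul_rpow hlam.le hr.le, rpow_add hr, rpow_one, rpow_neg_one r]
        field_simp

theorem sq_norm_mul_rpow_le_of_mul_le_one
    (h_small : ∀ τ : ℝ, 0 < τ → τ ≤ 1 → ‖h τ‖ ≤ C * τ ^ γ)
    (hlam : 1 ≤ lam) (hr : 0 < r) (h1 : lam * r ≤ 1) (hk : 0 ≤ k)
    (hγ : 0 ≤ 2 * (γ - c) + 1 + 2 * k) :
    ‖h (lam * r)‖ ^ 2 * r ^ (1 + 2 * k) ≤ C ^ 2 * lam ^ (-1 : ℝ) * (lam * r) ^ (2 * c) := by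
  have hlam₀ : 0 < lam := by linarith
  have hx : 0 < lam * r := by positivity
  have hsq := sq_le_sq_mul_rpow_of_le (norm_nonneg _) hx.le (h_small _ hx h1)
  -- `r = lam⁻¹ * (lam * r)` moves all the `r`-dependence into the power of `lam * r ≤ 1`
  have hsplit : (lam * r) ^ (2 * γ) * r ^ (1 + 2 * k) =
      lam ^ (-(1 + 2 * k)) * ((lam * r) ^ (2 * c) * (lam * r) ^ (2 * (γ - c) + 1 + 2 * k)) := by
    rw [← rpow_add hx, show 2 * c + (2 * (γ - c) + 1 + 2 * k) = 2 * γ + (1 + 2 * k) by ring,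
      rpow_add hx, mul_rpow hlam₀.le hr.le (z := 1 + 2 * k), rpow_neg hlam₀.le]
    field_simp
  calc ‖h (lam * r)‖ ^ 2 * r ^ (1 + 2 * k) ≤ C ^ 2 * (lam * r) ^ (2 * γ) * r ^ (1 + 2 * k) := by
        gcongr
    _ = C ^ 2 * lam ^ (-(1 + 2 * k)) * (lam * r) ^ (2 * c) * (lam * r) ^ (2 * (γ - c) + 1 + 2 * k) := by
        rw [mul_assoc, hsplit]; ring
    _ ≤ C ^ 2 * lam ^ (-1 : ℝ) * (lam * r) ^ (2 * c) * 1 := by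
        have hlam_pow : lam ^ (-(1 + 2 * k)) ≤ lam ^ (-1 : ℝ) :=
          rpow_le_rpow_of_exponent_le hlam (by linarith)
        have hx_pow : (lam * r) ^ (2 * (γ - c) + 1 + 2 * k) ≤ 1 := rpow_le_one hx.le h1 hγ
        gcongr
    _ = C ^ 2 * lam ^ (-1 : ℝ) * (lam * r) ^ (2 * c) := mul_one _

theorem sq_norm_mul_rpow_le
    (h_small : ∀ τ : ℝ, 0 < τ → τ ≤ 1 → ‖h τ‖ ≤ C * τ ^ γ)
    (h_large : ∀ τ : ℝ, 1 ≤ τ → ‖h τ‖ ≤ C * τ ^ (-(1 : ℝ) / 2))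
    (hlam : 1 ≤ lam) (hr : 0 < r) (hk : 0 ≤ k) (hγ : 0 ≤ 2 * γ + 1 + 2 * k) :
    ‖h (lam * r)‖ ^ 2 * r ^ (1 + 2 * k) ≤ C ^ 2 * lam ^ (-1 : ℝ) * (1 + r) ^ (2 * k) := by
  rcases le_total 1 (lam * r) with h1 | h1
  · calc ‖h (lam * r)‖ ^ 2 * r ^ (1 + 2 * k) ≤ C ^ 2 * lam ^ (-1 : ℝ) * r ^ (2 * k) :=
          sq_norm_mul_rpow_le_of_one_le_mul h_large (by linarith) hr h1
      _ ≤ C ^ 2 * lam ^ (-1 : ℝ) * (1 + r) ^ (2 * k) := by gcongr; linarith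
  · calc ‖h (lam * r)‖ ^ 2 * r ^ (1 + 2 * k) ≤ C ^ 2 * lam ^ (-1 : ℝ) * (lam * r) ^ (2 * 0) :=
          sq_norm_mul_rpow_le_of_mul_le_one h_small hlam hr h1 hk (by linarith)
      _ ≤ C ^ 2 * lam ^ (-1 : ℝ) * (1 + r) ^ (2 * k) := by
          rw [mul_zero, rpow_zero]
          gcongr
          exact one_le_rpow (by linarith) (by linarith)

theorem sq_norm_mul_sq_norm_mul_rpow_le {f g : ℝ → E} {ν α β ℓ m s : ℝ}
    (hν : 0 ≤ ν) (hℓ : 0 ≤ ℓ) (hm : 0 ≤ m)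
    (hα : 0 ≤ 2 * α + 1 + 2 * ℓ) (hβ : 0 ≤ 1 + 2 * m - 2 * β)
    (hf_small : ∀ τ : ℝ, 0 < τ → τ ≤ 1 → ‖f τ‖ ≤ C * τ ^ (ν + α))
    (hf_large : ∀ τ : ℝ, 1 ≤ τ → ‖f τ‖ ≤ C * τ ^ (-(1 : ℝ) / 2))
    (hg_small : ∀ τ : ℝ, 0 < τ → τ ≤ 1 → ‖g τ‖ ≤ C * τ ^ (-(ν + β)))
    (hg_large : ∀ τ : ℝ, 1 ≤ τ → ‖g τ‖ ≤ C * τ ^ (-(1 : ℝ) / 2))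
    (hlam : 1 ≤ lam) (hr : 0 < r) (hrs : r ≤ s) :
    ‖f (lam * r)‖ ^ 2 * ‖g (lam * s)‖ ^ 2 * r ^ (1 + 2 * ℓ) * s ^ (1 + 2 * m) ≤
      C ^ 4 * lam ^ (-2 : ℝ) * ((1 + r) ^ (2 * ℓ) * (1 + s) ^ (2 * m)) := by
  have hs : 0 < s := hr.trans_le hrs
  have hlam_sq : lam ^ (-1 : ℝ) * lam ^ (-1 : ℝ) = lam ^ (-2 : ℝ) := by
    rw [← rpow_add (by linarith)]; norm_num
  have hregroup : ‖f (lam * r)‖ ^ 2 * ‖g (lam * s)‖ ^ 2 * r ^ (1 + 2 * ℓ) * s ^ (1 + 2 * m) =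
      (‖f (lam * r)‖ ^ 2 * r ^ (1 + 2 * ℓ)) * (‖g (lam * s)‖ ^ 2 * s ^ (1 + 2 * m)) := by ring
  rw [hregroup]
  rcases le_or_gt 1 (lam * s) with hlams | hlams
  · have hF := sq_norm_mul_rpow_le hf_small hf_large hlam hr hℓ (by linarith)
    have hG : ‖g (lam * s)‖ ^ 2 * s ^ (1 + 2 * m) ≤ C ^ 2 * lam ^ (-1 : ℝ) * (1 + s) ^ (2 * m) :=
      (sq_norm_mul_rpow_le_of_one_le_mul hg_large (by linarith) hs hlams).trans
        (by gcongr; linarith)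
    calc _ ≤ (C ^ 2 * lam ^ (-1 : ℝ) * (1 + r) ^ (2 * ℓ)) *
          (C ^ 2 * lam ^ (-1 : ℝ) * (1 + s) ^ (2 * m)) :=
          mul_le_mul hF hG (by positivity) (by positivity)
      _ = _ := by rw [← hlam_sq]; ring
  · have hlamr : lam * r ≤ 1 := (mul_le_mul_of_nonneg_left hrs (by linarith)).trans hlams.le
    have hF := sq_norm_mul_rpow_le_of_mul_le_one (c := ν) hf_small hlam hr hlamr hℓ (by linarith)
    have hG := sq_norm_mul_rpow_le_of_mul_le_one (c := -ν) hg_small hlam hs hlams.le hm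
      (by linarith)
    have hratio : (lam * r) ^ (2 * ν) * (lam * s) ^ (2 * -ν) ≤ 1 := by
      rw [show 2 * -ν = -(2 * ν) by ring, rpow_neg (by positivity)]
      exact mul_inv_le_one_of_le₀ (rpow_le_rpow (by positivity) (by gcongr) (by positivity))
        (by positivity)
    have hweight : 1 ≤ (1 + r) ^ (2 * ℓ) * (1 + s) ^ (2 * m) :=
      one_le_mul_of_one_le_of_one_le (one_le_rpow (by linarith) (by linarith))
        (one_le_rpow (by linarith) (by linarith))
    calc _ ≤ (C ^ 2 * lam ^ (-1 : ℝ) * (lam * r) ^ (2 * ν)) *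
          (C ^ 2 * lam ^ (-1 : ℝ) * (lam * s) ^ (2 * -ν)) :=
          mul_le_mul hF hG (by positivity) (by positivity)
      _ = C ^ 4 * lam ^ (-2 : ℝ) * ((lam * r) ^ (2 * ν) * (lam * s) ^ (2 * -ν)) := by
          rw [← hlam_sq]; ring
      _ ≤ _ := mul_le_mul_of_nonneg_left (hratio.trans hweight) (by positivity)

theorem sq_norm_mul_sq_norm_mul_rpow_mul_weight_le {f g : ℝ → E} {ν α β ℓ m σ s : ℝ}
    (hν : 0 ≤ ν) (hℓ : 0 ≤ ℓ) (hm : 0 ≤ m)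
    (hα : 0 ≤ 2 * α + 1 + 2 * ℓ) (hβ : 0 ≤ 1 + 2 * m - 2 * β)
    (hf_small : ∀ τ : ℝ, 0 < τ → τ ≤ 1 → ‖f τ‖ ≤ C * τ ^ (ν + α))
    (hf_large : ∀ τ : ℝ, 1 ≤ τ → ‖f τ‖ ≤ C * τ ^ (-(1 : ℝ) / 2))
    (hg_small : ∀ τ : ℝ, 0 < τ → τ ≤ 1 → ‖g τ‖ ≤ C * τ ^ (-(ν + β)))
    (hg_large : ∀ τ : ℝ, 1 ≤ τ → ‖g τ‖ ≤ C * τ ^ (-(1 : ℝ) / 2))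
    (hlam : 1 ≤ lam) (hr : 0 < r) (hrs : r ≤ s) :
    ‖f (lam * r)‖ ^ 2 * ‖g (lam * s)‖ ^ 2 * r ^ (1 + 2 * ℓ) * s ^ (1 + 2 * m) *
        (1 + s) ^ (-(2 * σ)) * (1 + r) ^ (-(2 * σ)) ≤
      (C ^ 4 * lam ^ (-2 : ℝ) * (1 + r) ^ (2 * ℓ - 2 * σ)) * (1 + s) ^ (2 * m - 2 * σ) := by
  have hs : 0 < s := hr.trans_le hrs
  have hweighted := mul_le_mul_of_nonneg_right
    (sq_norm_mul_sq_norm_mul_rpow_le hν hℓ hm hα hβ hf_small hf_large hg_small hg_large hlam hr hrs)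
    (by positivity : 0 ≤ (1 + s) ^ (-(2 * σ)) * (1 + r) ^ (-(2 * σ)))
  rw [← mul_assoc] at hweighted
  rw [sub_eq_add_neg, sub_eq_add_neg, rpow_add (by linarith : (0 : ℝ) < 1 + r),
    rpow_add (by linarith : (0 : ℝ) < 1 + s)]
  exact hweighted.trans_eq (by ring)

end ScaledProfile

theorem resolvent_kernel_weighted_L2L2_bound_general
    (n : ℕ) (hn : 3 ≤ n) (ν : ℝ) (hν : ((n : ℝ) - 2) / 2 ≤ ν)
    (ℓ m : ℕ) (α β : ℤ) (hα : |α| ≤ (ℓ : ℤ)) (hβ : |β| ≤ (m : ℤ))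
    (σ : ℝ) (hσ : 1 / 2 + ((ℓ : ℝ) + (m : ℝ)) < σ)
    (f g : ℝ → ℂ)
    (C₀ : ℝ) (hC₀ : 0 < C₀)
    (hf_small : ∀ τ : ℝ, 0 < τ → τ ≤ 1 → ‖f τ‖ ≤ C₀ * τ ^ (ν + (α : ℝ)))
    (hf_large : ∀ τ : ℝ, 1 ≤ τ → ‖f τ‖ ≤ C₀ * τ ^ (-(1 : ℝ) / 2))
    (hg_small : ∀ τ : ℝ, 0 < τ → τ ≤ 1 → ‖g τ‖ ≤ C₀ * τ ^ (-(ν + (β : ℝ))))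
    (hg_large : ∀ τ : ℝ, 1 ≤ τ → ‖g τ‖ ≤ C₀ * τ ^ (-(1 : ℝ) / 2)) :
    ∃ C > (0 : ℝ), ∀ lam : ℝ, 1 ≤ lam →
      (∫ r in Ioi (0 : ℝ), ∫ s in Ioi r,
          ‖f (lam * r)‖ ^ (2 : ℕ) * ‖g (lam * s)‖ ^ (2 : ℕ) *
            r ^ (1 + 2 * (ℓ : ℝ)) * s ^ (1 + 2 * (m : ℝ)) *
              (1 + s) ^ (-(2 * σ)) * (1 + r) ^ (-(2 * σ)))
        ≤ C * lam ^ (-(2 : ℝ)) := by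
  have hν₀ : 0 ≤ ν := by
    have : (3 : ℝ) ≤ n := by exact_mod_cast hn
    linarith
  have hα' : -(ℓ : ℝ) ≤ α := by exact_mod_cast (abs_le.mp hα).1
  have hβ' : (β : ℝ) ≤ m := by exact_mod_cast (abs_le.mp hβ).2
  have hℓσ : 2 * (ℓ : ℝ) - 2 * σ < -1 := by linarith [(m.cast_nonneg : (0 : ℝ) ≤ m)]
  have hmσ : 2 * (m : ℝ) - 2 * σ < -1 := by linarith [(ℓ.cast_nonneg : (0 : ℝ) ≤ ℓ)]
  refine ⟨C₀ ^ 4 / ((2 * σ - 2 * ℓ - 1) * (2 * σ - 2 * m - 1)),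
    div_pos (by positivity) (mul_pos (by linarith) (by linarith)), fun lam hlam ↦ ?_⟩
  calc _ ≤ (∫ r in Ioi (0 : ℝ), C₀ ^ 4 * lam ^ (-2 : ℝ) * (1 + r) ^ (2 * (ℓ : ℝ) - 2 * σ)) *
        ∫ s in Ioi (0 : ℝ), (1 + s) ^ (2 * (m : ℝ) - 2 * σ) := by
        refine setIntegral_Ioi_setIntegral_Ioi_le_mul (fun r s hr hrs ↦ ?_)
          (fun r s hr hrs ↦ sq_norm_mul_sq_norm_mul_rpow_mul_weight_le hν₀ ℓ.cast_nonneg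
            m.cast_nonneg (by linarith) (by linarith) hf_small hf_large hg_small hg_large hlam hr
            hrs.le)
          (fun r hr ↦ by positivity) (fun s hs ↦ by positivity)
          ((integrableOn_Ioi_one_add_rpow hℓσ).const_mul _) (integrableOn_Ioi_one_add_rpow hmσ)
        have hs : 0 < s := hr.trans hrs
        positivity
    _ = _ := by
        rw [integral_const_mul, integral_Ioi_one_add_rpow hℓσ, integral_Ioi_one_add_rpow hmσ]
        field_simp [(by linarith : 2 * (ℓ : ℝ) - 2 * σ + 1 < 0).ne,
          (by linarith : 2 * (m : ℝ) - 2 * σ + 1 < 0).ne]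
        congr 1
        ring

theorem resolvent_kernel_weighted_L2L2_bound
    (n : ℕ) (hn : 3 ≤ n) (ν : ℝ) (hν : ((n : ℝ) - 2) / 2 ≤ ν)
    (ℓ m : ℕ) (α β : ℤ) (hα : |α| ≤ (ℓ : ℤ)) (hβ : |β| ≤ (m : ℤ))
    (σ : ℝ) (hσ : 1 / 2 + ((ℓ : ℝ) + (m : ℝ)) < σ)
    (f g : ℝ → ℂ) (hf : Measurable f) (hg : Measurable g)
    (C₀ : ℝ) (hC₀ : 0 < C₀)
    (hf_small : ∀ τ : ℝ, 0 < τ → τ ≤ 1 → ‖f τ‖ ≤ C₀ * τ ^ (ν + (α : ℝ)))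
    (hf_large : ∀ τ : ℝ, 1 ≤ τ → ‖f τ‖ ≤ C₀ * τ ^ (-(1 : ℝ) / 2))
    (hg_small : ∀ τ : ℝ, 0 < τ → τ ≤ 1 → ‖g τ‖ ≤ C₀ * τ ^ (-(ν + (β : ℝ))))
    (hg_large : ∀ τ : ℝ, 1 ≤ τ → ‖g τ‖ ≤ C₀ * τ ^ (-(1 : ℝ) / 2)) :
    ∃ C > (0 : ℝ), ∀ lam : ℝ, 1 ≤ lam →
      (∫ r in Ioi (0 : ℝ), ∫ s in Ioi r,
          ‖f (lam * r)‖ ^ (2 : ℕ) * ‖g (lam * s)‖ ^ (2 : ℕ) *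
            r ^ (1 + 2 * (ℓ : ℝ)) * s ^ (1 + 2 * (m : ℝ)) *
              (1 + s) ^ (-(2 * σ)) * (1 + r) ^ (-(2 * σ)))
        ≤ C * lam ^ (-(2 : ℝ)) :=
  resolvent_kernel_weighted_L2L2_bound_general n hn ν hν ℓ m α β hα hβ σ hσ f g C₀ hC₀ hf_small
    hf_large hg_small hg_large
end
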